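/- arXiv:2512.24270 — 7 statements merged into one kernel-verified Lean document; each statement's English description precedes it below -/
import Mathlib

section
/- Let A be an N×N real matrix with nonnegative entries, β ≥ 0 with β · max_i ∑_j A_{ij} < 1, and fix c ≥ 0. If two subsets S₁, S₂ of {0,…,N−1} satisfy (I − β A[S₁])^{-1} 𝟙_{S₁} ≥ c 𝟙_{S₁} entrywise and (I − β A[S₂])^{-1} 𝟙_{S₂} ≥ c 𝟙_{S₂} entrywise, then their union satisfies (I − β A[S₁ ∪ S₂])^{-1} 𝟙_{S₁ ∪ S₂} ≥ c 𝟙_{S₁ ∪ S₂} entrywise. -/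
open Matrix

/-- Principal submatrix of `A` indexed by the subset `S`. -/
def psub {N : ℕ} (A : Matrix (Fin N) (Fin N) ℝ) (S : Finset (Fin N)) :
    Matrix {i // i ∈ S} {i // i ∈ S} ℝ :=
  Matrix.of fun i j => A i.1 j.1

/-- Bonacich centrality vector `(I - β A[S])⁻¹ 𝟙_S` of the induced subnetwork on `S`. -/
noncomputable def bon {N : ℕ} (A : Matrix (Fin N) (Fin N) ℝ) (β : ℝ) (S : Finset (Fin N)) :
    {i // i ∈ S} → ℝ :=
  (1 - β • psub A S)⁻¹ *ᵥ fun _ => 1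

/-! Since `β A[S]` is nonnegative with row sums below `1`, a discrete maximum principle shows
that `1 - β A[S]` is invertible and inverse-monotone: `(1 - β A[S]) x ≤ (1 - β A[S]) y` implies
`x ≤ y`. For `S ⊆ T`, the restriction of `bon A β T` to `S` satisfies
`(1 - β A[S]) x ≥ 1 = (1 - β A[S]) (bon A β S)`, because the dropped terms `β A i j x j` with
`j ∈ T \ S` are nonnegative. So `bon A β` is monotone in the vertex set, and every vertex of
`S₁ ∪ S₂` inherits the bound `c` from `S₁` or from `S₂`. -/

theorem submatrix_mulVec_comp_le {k l m n : Type*} [Fintype m] [Fintype n]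
    {M : Matrix l n ℝ} (hM : ∀ i j, 0 ≤ M i j) {v : n → ℝ} (hv : 0 ≤ v)
    (f : k → l) {e : m → n} (he : e.Injective) :
    M.submatrix f e *ᵥ (v ∘ e) ≤ (M *ᵥ v) ∘ f := by
  intro i
  calc ∑ j, M (f i) (e j) * v (e j) = ∑ k ∈ Finset.univ.map ⟨e, he⟩, M (f i) k * v k :=
        (Finset.sum_map Finset.univ ⟨e, he⟩ fun k => M (f i) k * v k).symm
    _ ≤ ∑ k, M (f i) k * v k :=
        Finset.sum_le_univ_sum_of_nonneg fun k => mul_nonneg (hM _ _) (hv k)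

section Substochastic

variable {n : Type*} [Fintype n] [DecidableEq n] {B : Matrix n n ℝ}

/-- A discrete maximum principle: at a minimum `x i` of a vector `x` with a negative entry,
`((1 - B) *ᵥ x) i ≤ (1 - ∑ j, B i j) * x i < 0`. -/
theorem nonneg_of_one_sub_mulVec_nonneg (hB : ∀ i j, 0 ≤ B i j) (hrow : ∀ i, ∑ j, B i j < 1)
    {x : n → ℝ} (hx : 0 ≤ (1 - B) *ᵥ x) : 0 ≤ x := by
  by_contra hneg
  obtain ⟨k, hk⟩ : ∃ k, x k < 0 := by simpa [Pi.le_def] using hneg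
  obtain ⟨i, -, hmin⟩ := Finset.univ.exists_min_image x ⟨k, Finset.mem_univ k⟩
  have hxi : x i < 0 := (hmin k (Finset.mem_univ k)).trans_lt hk
  have hBx : (∑ j, B i j) * x i ≤ (B *ᵥ x) i := by
    rw [Finset.sum_mul]
    exact Finset.sum_le_sum fun j _ =>
      mul_le_mul_of_nonneg_left (hmin j (Finset.mem_univ j)) (hB i j)
  have := hx i
  rw [sub_mulVec, one_mulVec, Pi.sub_apply, Pi.zero_apply] at this
  nlinarith [hrow i]

theorem le_of_one_sub_mulVec_le (hB : ∀ i j, 0 ≤ B i j) (hrow : ∀ i, ∑ j, B i j < 1)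
    {x y : n → ℝ} (h : (1 - B) *ᵥ x ≤ (1 - B) *ᵥ y) : x ≤ y :=
  sub_nonneg.1 <| nonneg_of_one_sub_mulVec_nonneg hB hrow <| by
    rwa [mulVec_sub, sub_nonneg]

theorem isUnit_det_one_sub (hB : ∀ i j, 0 ≤ B i j) (hrow : ∀ i, ∑ j, B i j < 1) :
    IsUnit (1 - B).det := by
  refine isUnit_iff_ne_zero.2 fun hdet => ?_
  obtain ⟨v, hv, hBv⟩ := exists_mulVec_eq_zero_iff.2 hdet
  have hv0 : (1 - B) *ᵥ v = (1 - B) *ᵥ 0 := by rw [hBv, mulVec_zero]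
  exact hv (le_antisymm (le_of_one_sub_mulVec_le hB hrow hv0.le)
    (le_of_one_sub_mulVec_le hB hrow hv0.ge))

end Substochastic

section Bonacich

variable {N : ℕ} {A : Matrix (Fin N) (Fin N) ℝ} {β : ℝ}

theorem smul_psub_nonneg (hA : ∀ i j, 0 ≤ A i j) (hβ : 0 ≤ β) (S : Finset (Fin N)) :
    ∀ i j, 0 ≤ (β • psub A S) i j :=
  fun _ _ => mul_nonneg hβ (hA _ _)

theorem sum_smul_psub_lt_one (hA : ∀ i j, 0 ≤ A i j) (hβ : 0 ≤ β)
    (hrow : ∀ i, β * ∑ j, A i j < 1) (S : Finset (Fin N)) (i : {i // i ∈ S}) :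
    ∑ j, (β • psub A S) i j < 1 :=
  calc ∑ j, (β • psub A S) i j = β * ∑ j ∈ S, A i j := by
        rw [Finset.mul_sum, ← Finset.sum_coe_sort S]; rfl
    _ ≤ β * ∑ j, A i j := by gcongr; exacts [fun j _ _ => hA _ _, Finset.subset_univ S]
    _ < 1 := hrow i

variable (hA : ∀ i j, 0 ≤ A i j) (hβ : 0 ≤ β) (hrow : ∀ i, β * ∑ j, A i j < 1)
include hA hβ hrow

theorem one_sub_mulVec_bon (S : Finset (Fin N)) : (1 - β • psub A S) *ᵥ bon A β S = 1 := by
  rw [bon, mulVec_mulVec, mul_nonsing_inv _ (isUnit_det_one_sub (smul_psub_nonneg hA hβ S)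
    (sum_smul_psub_lt_one hA hβ hrow S)), one_mulVec]
  rfl

theorem bon_nonneg (S : Finset (Fin N)) : 0 ≤ bon A β S :=
  nonneg_of_one_sub_mulVec_nonneg (smul_psub_nonneg hA hβ S) (sum_smul_psub_lt_one hA hβ hrow S)
    (by rw [one_sub_mulVec_bon hA hβ hrow]; exact zero_le_one)

theorem bon_le_bon_of_subset {S T : Finset (Fin N)} (hST : S ⊆ T) (i : {i // i ∈ S}) :
    bon A β S i ≤ bon A β T ⟨i, hST i.2⟩ := by
  let e : {i // i ∈ S} → {i // i ∈ T} := fun j => ⟨j, hST j.2⟩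
  have he : e.Injective := fun j k h => Subtype.ext (Subtype.mk.inj h)
  have hsub : psub A S *ᵥ (bon A β T ∘ e) ≤ (psub A T *ᵥ bon A β T) ∘ e :=
    submatrix_mulVec_comp_le (M := psub A T) (fun _ _ => hA _ _) (bon_nonneg hA hβ hrow T) e he
  have hsuper :
      (1 - β • psub A S) *ᵥ bon A β S ≤ (1 - β • psub A S) *ᵥ (bon A β T ∘ e) :=
    calc (1 - β • psub A S) *ᵥ bon A β S = ((1 - β • psub A T) *ᵥ bon A β T) ∘ e := by
          rw [one_sub_mulVec_bon hA hβ hrow, one_sub_mulVec_bon hA hβ hrow]; rfl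
      _ = bon A β T ∘ e - β • ((psub A T *ᵥ bon A β T) ∘ e) := by
          rw [sub_mulVec, one_mulVec, smul_mulVec]; rfl
      _ ≤ bon A β T ∘ e - β • (psub A S *ᵥ (bon A β T ∘ e)) := by gcongr
      _ = (1 - β • psub A S) *ᵥ (bon A β T ∘ e) := by
          rw [sub_mulVec, one_mulVec, smul_mulVec]
  exact le_of_one_sub_mulVec_le (smul_psub_nonneg hA hβ S) (sum_smul_psub_lt_one hA hβ hrow S)
    hsuper i

end Bonacich

theorem union_stable_general {N : ℕ} (A : Matrix (Fin N) (Fin N) ℝ) (β : ℝ)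
    (hA : ∀ i j, 0 ≤ A i j) (hβ : 0 ≤ β) (hrow : ∀ i, β * ∑ j, A i j < 1)
    (c : ℝ) (S₁ S₂ : Finset (Fin N))
    (h₁ : ∀ i : {i // i ∈ S₁}, c ≤ bon A β S₁ i)
    (h₂ : ∀ i : {i // i ∈ S₂}, c ≤ bon A β S₂ i) :
    ∀ i : {i // i ∈ S₁ ∪ S₂}, c ≤ bon A β (S₁ ∪ S₂) i := by
  rintro ⟨i, hi⟩
  rcases Finset.mem_union.1 hi with hi₁ | hi₂
  · exact (h₁ ⟨i, hi₁⟩).trans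
      (bon_le_bon_of_subset hA hβ hrow Finset.subset_union_left ⟨i, hi₁⟩)
  · exact (h₂ ⟨i, hi₂⟩).trans
      (bon_le_bon_of_subset hA hβ hrow Finset.subset_union_right ⟨i, hi₂⟩)

/-- If `S₁` and `S₂` are both `c`-stable, then so is their union. -/
theorem union_stable {N : ℕ} (A : Matrix (Fin N) (Fin N) ℝ) (β : ℝ)
    (hA : ∀ i j, 0 ≤ A i j) (hβ : 0 ≤ β) (hrow : ∀ i, β * ∑ j, A i j < 1)
    (c : ℝ) (hc : 0 ≤ c) (S₁ S₂ : Finset (Fin N))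
    (h₁ : ∀ i : {i // i ∈ S₁}, c ≤ bon A β S₁ i)
    (h₂ : ∀ i : {i // i ∈ S₂}, c ≤ bon A β S₂ i) :
    ∀ i : {i // i ∈ S₁ ∪ S₂}, c ≤ bon A β (S₁ ∪ S₂) i :=
  union_stable_general A β hA hβ hrow c S₁ S₂ h₁ h₂
end

section
/- Let A be an N×N real matrix with nonnegative entries and β ≥ 0 with β · max_i ∑_j A_{ij} < 1. For any subsets S ⊆ T of {0,…,N−1} and any i ∈ S, the i-th entry of the Bonacich centrality vector of the induced subgraph on S is at most the i-th entry of that on T: [(I − β A[S])^{-1} 𝟙_S]_i ≤ [(I − β A[T])^{-1} 𝟙_T]_i. In particular, Bonacich centrality is entrywise monotone under node deletion. -/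
open Matrix

/-!
Write `b := (1 - M)⁻¹ *ᵥ 1` for a nonnegative matrix `M` with row sums `< 1`. A minimum principle
holds for `1 - M`: if `(1 - M) *ᵥ c ≥ 0` then `c ≥ 0`; in particular `1 - M` is invertible and
`b ≥ 0`. For a principal submatrix `M[e]`, nonnegativity of `M` and `b` gives
`(1 - M[e]) *ᵥ (b ∘ e) ≥ ((1 - M) *ᵥ b) ∘ e = 1 = (1 - M[e]) *ᵥ ((1 - M[e])⁻¹ *ᵥ 1)`, so the
minimum principle for `M[e]` yields `(1 - M[e])⁻¹ *ᵥ 1 ≤ b ∘ e`. Bonacich centrality on `S ⊆ T`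
is the case `M = β • A[T]` and `e` the inclusion `S → T`.
-/

theorem Finset.sum_comp_le_sum_of_injective {ι κ R : Type*} [Fintype ι] [Fintype κ]
    [AddCommMonoid R] [PartialOrder R] [IsOrderedAddMonoid R] {f : ι → R} (hf : 0 ≤ f)
    {e : κ → ι} (he : e.Injective) : ∑ j, f (e j) ≤ ∑ i, f i :=
  (Finset.sum_map Finset.univ ⟨e, he⟩ f).symm.trans_le (Finset.sum_le_univ_sum_of_nonneg hf)

namespace Matrix

variable {ι κ R : Type*} [Fintype ι] [Fintype κ]
  [Field R] [LinearOrder R] [IsStrictOrderedRing R] {M : Matrix ι ι R}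

theorem sum_submatrix_le (hM : ∀ i j, 0 ≤ M i j) {e : κ → ι} (he : e.Injective) (k : κ) :
    ∑ j, M.submatrix e e k j ≤ ∑ i, M (e k) i :=
  Finset.sum_comp_le_sum_of_injective (hM (e k)) he

theorem submatrix_mulVec_comp_le (hM : ∀ i j, 0 ≤ M i j) {x : ι → R} (hx : 0 ≤ x) {e : κ → ι}
    (he : e.Injective) : M.submatrix e e *ᵥ (x ∘ e) ≤ (M *ᵥ x) ∘ e := fun k ↦
  Finset.sum_comp_le_sum_of_injective (f := fun i ↦ M (e k) i * x i)
    (fun i ↦ mul_nonneg (hM _ _) (hx i)) he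

variable [DecidableEq ι]

/-- Minimum principle: at a minimal entry `c i < 0` we would get
`c i ≥ (M *ᵥ c) i ≥ (∑ j, M i j) * c i > c i`. -/
theorem nonneg_of_nonneg_one_sub_mulVec (hM : ∀ i j, 0 ≤ M i j) (hrow : ∀ i, ∑ j, M i j < 1)
    {c : ι → R} (hc : 0 ≤ (1 - M) *ᵥ c) : 0 ≤ c := by
  intro i₀
  by_contra! hneg
  obtain ⟨i, -, hmin⟩ := Finset.univ.exists_min_image c ⟨i₀, Finset.mem_univ _⟩
  have hci : c i < 0 := (hmin i₀ (Finset.mem_univ _)).trans_lt hneg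
  have hMc : (M *ᵥ c) i ≤ c i := by simpa [sub_mulVec] using hc i
  have hrow_min : (∑ j, M i j) * c i ≤ (M *ᵥ c) i := by
    rw [mulVec, dotProduct, Finset.sum_mul]
    exact Finset.sum_le_sum fun j _ ↦ mul_le_mul_of_nonneg_left (hmin j (Finset.mem_univ _)) (hM i j)
  nlinarith [hrow i]

theorem isUnit_one_sub_of_nonneg_of_sum_lt_one (hM : ∀ i j, 0 ≤ M i j)
    (hrow : ∀ i, ∑ j, M i j < 1) : IsUnit (1 - M) := by
  rw [← mulVec_injective_iff_isUnit]
  intro x y hxy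
  have hle : ∀ u v, (1 - M) *ᵥ u = (1 - M) *ᵥ v → v ≤ u := fun u v h ↦
    sub_nonneg.1 <| nonneg_of_nonneg_one_sub_mulVec hM hrow (by rw [mulVec_sub, h, sub_self])
  exact le_antisymm (hle _ _ hxy.symm) (hle _ _ hxy)

theorem one_sub_mulVec_inv_mulVec (hM : ∀ i j, 0 ≤ M i j) (hrow : ∀ i, ∑ j, M i j < 1)
    (v : ι → R) : (1 - M) *ᵥ ((1 - M)⁻¹ *ᵥ v) = v := by
  have hdet := (isUnit_iff_isUnit_det _).1 (isUnit_one_sub_of_nonneg_of_sum_lt_one hM hrow)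
  rw [mulVec_mulVec, mul_nonsing_inv _ hdet, one_mulVec]

theorem inv_one_sub_submatrix_mulVec_one_le [DecidableEq κ] (hM : ∀ i j, 0 ≤ M i j)
    (hrow : ∀ i, ∑ j, M i j < 1) {e : κ → ι} (he : e.Injective) :
    (1 - M.submatrix e e)⁻¹ *ᵥ 1 ≤ ((1 - M)⁻¹ *ᵥ 1) ∘ e := by
  have hM' : ∀ k l, 0 ≤ M.submatrix e e k l := fun k l ↦ hM _ _
  have hrow' : ∀ k, ∑ l, M.submatrix e e k l < 1 := fun k ↦
    (sum_submatrix_le hM he k).trans_lt (hrow _)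
  set b := (1 - M)⁻¹ *ᵥ 1
  have hb : (1 - M) *ᵥ b = 1 := one_sub_mulVec_inv_mulVec hM hrow 1
  have hb_nonneg : 0 ≤ b := nonneg_of_nonneg_one_sub_mulVec hM hrow (hb ▸ zero_le_one)
  suffices h : 1 ≤ (1 - M.submatrix e e) *ᵥ (b ∘ e) by
    rw [← sub_nonneg]
    refine nonneg_of_nonneg_one_sub_mulVec hM' hrow' ?_
    rwa [mulVec_sub, one_sub_mulVec_inv_mulVec hM' hrow', sub_nonneg]
  calc (1 : κ → R) = ((1 - M) *ᵥ b) ∘ e := by rw [hb]; rfl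
    _ = b ∘ e - (M *ᵥ b) ∘ e := by rw [sub_mulVec, one_mulVec]; rfl
    _ ≤ b ∘ e - M.submatrix e e *ᵥ (b ∘ e) :=
      sub_le_sub_left (submatrix_mulVec_comp_le hM hb_nonneg he) _
    _ = (1 - M.submatrix e e) *ᵥ (b ∘ e) := by rw [sub_mulVec, one_mulVec]

end Matrix

/-- Bonacich centrality is entrywise monotone under node deletion: for `S ⊆ T`
and `i ∈ S`, the centrality of `i` in the subnetwork on `S` is at most that in
the subnetwork on `T`. -/
theorem bonacich_monotone_node_deletion {N : ℕ} (A : Matrix (Fin N) (Fin N) ℝ) (β : ℝ)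
    (hA : ∀ i j, 0 ≤ A i j) (hβ : 0 ≤ β) (hrow : ∀ i, β * ∑ j, A i j < 1)
    (S T : Finset (Fin N)) (hST : S ⊆ T) (i : Fin N) (hi : i ∈ S) :
    bon A β S ⟨i, hi⟩ ≤ bon A β T ⟨i, hST hi⟩ := by
  have hβA : ∀ j k, 0 ≤ (β • A) j k := fun j k ↦ mul_nonneg hβ (hA j k)
  have hrow_βA : ∀ j, ∑ k, (β • A) j k < 1 := by simpa [Finset.mul_sum] using hrow
  -- `β • psub A T` is definitionally `(β • A).submatrix Subtype.val Subtype.val`, and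
  -- `β • psub A S` is definitionally its submatrix along `Set.inclusion hST`.
  have hβA_T : ∀ j k, 0 ≤ (β • psub A T) j k := fun j k ↦ hβA _ _
  have hrow_βA_T : ∀ j, ∑ k, (β • psub A T) j k < 1 := fun j ↦
    (sum_submatrix_le hβA Subtype.val_injective j).trans_lt (hrow_βA _)
  exact inv_one_sub_submatrix_mulVec_one_le hβA_T hrow_βA_T (Set.inclusion_injective hST) ⟨i, hi⟩
end

section
/- Let A be an N×N real matrix with nonnegative entries, β ≥ 0 with β · max_i ∑_j A_{ij} < 1, and α ≥ 0. Then the vector x* = α (I − β A)^{-1} 𝟙 is the unique solution in ℝ^N of the best-response system x = α 𝟙 + β A x, and it satisfies x* ≥ α 𝟙 entrywise (in particular x* is nonnegative). -/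
/-!
Write `M = β • A`: a nonnegative matrix with all row sums `< 1`. For such `M` a minimum principle
holds: if `M y ≤ y` entrywise then `y ≥ 0`, since at an entry `m` where `y` is smallest,
`y m ≥ ∑ⱼ M m j * y j ≥ (∑ⱼ M m j) * y m`. Applied to `±y` it shows that `1 - M` is injective,
hence invertible, which gives the uniqueness. Applied to `y = (1 - M)⁻¹ 𝟙 = 𝟙 + M y` it gives
`y ≥ 0`, hence `y ≥ 𝟙`.
-/

open Matrix

theorem Matrix.one_sub_mulVec {ι R : Type*} [Fintype ι] [DecidableEq ι] [Ring R]
    (M : Matrix ι ι R) (y : ι → R) : (1 - M) *ᵥ y = y - M *ᵥ y := by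
  rw [sub_mulVec, one_mulVec]

section

variable {ι R : Type*} [Fintype ι] [Field R] [LinearOrder R] [IsStrictOrderedRing R]
  {M : Matrix ι ι R}

theorem Matrix.mulVec_nonneg (hM : ∀ i j, 0 ≤ M i j) {y : ι → R} (hy : 0 ≤ y) :
    0 ≤ M *ᵥ y :=
  fun i => Finset.sum_nonneg fun j _ => mul_nonneg (hM i j) (hy j)

theorem Matrix.nonneg_of_mulVec_le_self (hM : ∀ i j, 0 ≤ M i j) (hrow : ∀ i, ∑ j, M i j < 1)
    {y : ι → R} (hy : M *ᵥ y ≤ y) : 0 ≤ y := by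
  intro k
  have : Nonempty ι := ⟨k⟩
  obtain ⟨m, -, hm⟩ := Finset.univ.exists_min_image y Finset.univ_nonempty
  have hmin : (∑ j, M m j) * y m ≤ y m :=
    calc (∑ j, M m j) * y m = ∑ j, M m j * y m := Finset.sum_mul ..
      _ ≤ ∑ j, M m j * y j :=
        Finset.sum_le_sum fun j _ => mul_le_mul_of_nonneg_left (hm j (Finset.mem_univ j)) (hM m j)
      _ ≤ y m := hy m
  have hym : 0 ≤ y m := by nlinarith [hrow m]
  exact hym.trans (hm k (Finset.mem_univ k))

variable [DecidableEq ι]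

theorem Matrix.isUnit_one_sub_of_rowSum_lt_one (hM : ∀ i j, 0 ≤ M i j)
    (hrow : ∀ i, ∑ j, M i j < 1) : IsUnit (1 - M) := by
  refine mulVec_injective_iff_isUnit.mp fun v w hvw => ?_
  have hfix : M *ᵥ (v - w) = v - w := by
    rw [eq_comm, ← sub_eq_zero, ← one_sub_mulVec, mulVec_sub, hvw, sub_self]
  have hneg : M *ᵥ (-(v - w)) = -(v - w) := by rw [mulVec_neg, hfix]
  exact sub_eq_zero.mp (le_antisymm
    (neg_nonneg.mp (nonneg_of_mulVec_le_self hM hrow hneg.le))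
    (nonneg_of_mulVec_le_self hM hrow hfix.le))

theorem Matrix.eq_add_mulVec_iff (hM : ∀ i j, 0 ≤ M i j) (hrow : ∀ i, ∑ j, M i j < 1)
    (b x : ι → R) : x = b + M *ᵥ x ↔ x = (1 - M)⁻¹ *ᵥ b := by
  have hdet := (isUnit_iff_isUnit_det _).mp (isUnit_one_sub_of_rowSum_lt_one hM hrow)
  rw [← sub_eq_iff_eq_add, ← one_sub_mulVec]
  constructor
  · rintro rfl
    rw [mulVec_mulVec, nonsing_inv_mul _ hdet, one_mulVec]
  · rintro rfl
    rw [mulVec_mulVec, mul_nonsing_inv _ hdet, one_mulVec]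

theorem Matrix.le_one_sub_inv_mulVec (hM : ∀ i j, 0 ≤ M i j) (hrow : ∀ i, ∑ j, M i j < 1)
    {b : ι → R} (hb : 0 ≤ b) : b ≤ (1 - M)⁻¹ *ᵥ b := by
  set y := (1 - M)⁻¹ *ᵥ b
  have hy : y = b + M *ᵥ y := (eq_add_mulVec_iff hM hrow b y).mpr rfl
  have hy_nonneg : 0 ≤ y := nonneg_of_mulVec_le_self hM hrow <|
    calc M *ᵥ y ≤ b + M *ᵥ y := le_add_of_nonneg_left hb
      _ = y := hy.symm
  calc b ≤ b + M *ᵥ y := le_add_of_nonneg_right (mulVec_nonneg hM hy_nonneg)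
    _ = y := hy.symm

end

/-- `x* = α (I - βA)⁻¹ 𝟙` is the unique solution of the best-response system
`x = α 𝟙 + β A x`, and it satisfies `x* ≥ α 𝟙` entrywise. -/
theorem equilibrium_unique_and_nonneg {N : ℕ} (A : Matrix (Fin N) (Fin N) ℝ) (β α : ℝ)
    (hA : ∀ i j, 0 ≤ A i j) (hβ : 0 ≤ β) (hrow : ∀ i, β * ∑ j, A i j < 1)
    (hα : 0 ≤ α) :
    (∀ x : Fin N → ℝ,
        (x = (α • fun _ => (1 : ℝ)) + β • (A *ᵥ x) ↔
          x = α • ((1 - β • A)⁻¹ *ᵥ fun _ => 1))) ∧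
      ∀ i, α ≤ (α • ((1 - β • A)⁻¹ *ᵥ fun _ => (1 : ℝ))) i := by
  have hM : ∀ i j, 0 ≤ (β • A) i j := fun i j => mul_nonneg hβ (hA i j)
  have hMrow : ∀ i, ∑ j, (β • A) i j < 1 := by simpa [Finset.mul_sum] using hrow
  refine ⟨fun x => ?_, fun i => ?_⟩
  · rw [← smul_mulVec, ← mulVec_smul]
    exact eq_add_mulVec_iff hM hMrow _ x
  · have hone := le_one_sub_inv_mulVec hM hMrow (b := fun _ => (1 : ℝ)) (fun _ => zero_le_one) i
    simpa using mul_le_mul_of_nonneg_left hone hα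
end

section
/- Let A be an N×N real matrix with nonnegative entries, β ≥ 0 with β · max_i ∑_j A_{ij} < 1, and α ∈ ℝ. Partition the index set as V = R ∪ P with R and P disjoint. Let b = α (I − β A)^{-1} 𝟙 be the Bonacich centrality of the full network and b(R) = α (I − β A_{RR})^{-1} 𝟙_R that of the induced subnetwork on R. Then the drop vector Δ^R := b_R − b(R) satisfies (I − β A_{RR}) Δ^R = β A_{RP} b_P, and hence Δ^R = β (I − β A_{RR})^{-1} A_{RP} b_P, where b_R and b_P are the restrictions of b to R and P. -/
/-!
Restricting the defining equation `(I - βA) b = α𝟙` to the rows in `R` and splitting the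
columns into `R` and `P` gives `(I - βA_{RR}) b_R = α𝟙 + βA_{RP} b_P`, while
`(I - βA_{RR}) b(R) = α𝟙`; subtracting yields the equation for `Δ^R`. Both `I - βA` and
`I - βA_{RR}` are strictly diagonally dominant, hence invertible by Gershgorin.
-/

open Matrix

/-- Off-diagonal block `A_{RP}` of `A` for subsets `R`, `P`. -/
def pblock {N : ℕ} (A : Matrix (Fin N) (Fin N) ℝ) (R P : Finset (Fin N)) :
    Matrix {i // i ∈ R} {j // j ∈ P} ℝ :=
  Matrix.of fun i j => A i.1 j.1

namespace Matrix

variable {ι : Type*} [Fintype ι] [DecidableEq ι]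

theorem isUnit_det_one_sub_smul_of_nonneg_of_rowSum_lt {M : Matrix ι ι ℝ} {β : ℝ}
    (hM : ∀ i j, 0 ≤ M i j) (hβ : 0 ≤ β) (hrow : ∀ i, β * ∑ j, M i j < 1) :
    IsUnit (1 - β • M).det := by
  refine (det_ne_zero_of_sum_row_lt_diag fun k => ?_).isUnit
  have hdiag : ‖(1 - β • M) k k‖ = 1 - β * M k k := by
    have : β * M k k ≤ β * ∑ j, M k j :=
      mul_le_mul_of_nonneg_left (Finset.single_le_sum (fun j _ => hM k j) (Finset.mem_univ k)) hβ
    rw [sub_apply, one_apply_eq, smul_apply, smul_eq_mul, Real.norm_eq_abs,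
      abs_of_nonneg (by linarith [hrow k])]
  have hoff :
      ∑ j ∈ Finset.univ.erase k, ‖(1 - β • M) k j‖ = β * (∑ j, M k j - M k k) := by
    rw [← Finset.sum_erase_eq_sub (Finset.mem_univ k), Finset.mul_sum]
    refine Finset.sum_congr rfl fun j hj => ?_
    rw [sub_apply, one_apply_ne (Finset.ne_of_mem_erase hj).symm, smul_apply, smul_eq_mul,
      zero_sub, norm_neg, Real.norm_eq_abs, abs_of_nonneg (mul_nonneg hβ (hM k j))]
  rw [hdiag, hoff]
  linarith [hrow k]

theorem nonsing_inv_mulVec_mulVec {R : Type*} [CommRing R] {M : Matrix ι ι R} (hM : IsUnit M.det)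
    (v : ι → R) :
    M⁻¹ *ᵥ (M *ᵥ v) = v := by
  rw [mulVec_mulVec, nonsing_inv_mul _ hM, one_mulVec]

theorem mulVec_nonsing_inv_mulVec {R : Type*} [CommRing R] {M : Matrix ι ι R} (hM : IsUnit M.det)
    (v : ι → R) :
    M *ᵥ (M⁻¹ *ᵥ v) = v := by
  rw [mulVec_mulVec, mul_nonsing_inv _ hM, one_mulVec]

end Matrix

section Blocks

variable {N : ℕ} {A : Matrix (Fin N) (Fin N) ℝ} {R P : Finset (Fin N)}

theorem sum_psub_le_rowSum (hA : ∀ i j, 0 ≤ A i j) (i : {i // i ∈ R}) :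
    ∑ j, psub A R i j ≤ ∑ j, A i.1 j :=
  (Finset.sum_coe_sort R (A i.1)).trans_le
    (Finset.sum_le_sum_of_subset_of_nonneg (Finset.subset_univ R) fun j _ _ => hA i.1 j)

theorem mulVec_apply_eq_psub_add_pblock (hdisj : Disjoint R P) (hcover : R ∪ P = Finset.univ)
    (v : Fin N → ℝ) (i : {i // i ∈ R}) :
    (A *ᵥ v) i.1 =
      (psub A R *ᵥ fun j : {j // j ∈ R} => v j.1) i +
        (pblock A R P *ᵥ fun j : {j // j ∈ P} => v j.1) i := by
  simp only [mulVec, dotProduct, psub, pblock, of_apply]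
  rw [Finset.sum_coe_sort R (fun j => A i.1 j * v j),
    Finset.sum_coe_sort P (fun j => A i.1 j * v j), ← Finset.sum_union hdisj, hcover]

theorem one_sub_smul_psub_mulVec_restrict (β : ℝ) (hdisj : Disjoint R P)
    (hcover : R ∪ P = Finset.univ) (v : Fin N → ℝ) :
    (1 - β • psub A R) *ᵥ (fun i : {i // i ∈ R} => v i.1) =
      (fun i : {i // i ∈ R} => ((1 - β • A) *ᵥ v) i.1) +
        β • (pblock A R P *ᵥ fun j : {j // j ∈ P} => v j.1) := by
  ext i
  simp only [sub_mulVec, one_mulVec, smul_mulVec, Pi.add_apply, Pi.sub_apply, Pi.smul_apply,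
    mulVec_apply_eq_psub_add_pblock hdisj hcover v i]
  ring

end Blocks

/-- The drop vector `Δ^R = b_R - b(R)` satisfies
`(I - β A_{RR}) Δ^R = β A_{RP} b_P`, hence `Δ^R = β (I - β A_{RR})⁻¹ A_{RP} b_P`. -/
theorem drop_vector_equation {N : ℕ} (A : Matrix (Fin N) (Fin N) ℝ) (β α : ℝ)
    (hA : ∀ i j, 0 ≤ A i j) (hβ : 0 ≤ β) (hrow : ∀ i, β * ∑ j, A i j < 1)
    (R P : Finset (Fin N)) (hdisj : Disjoint R P) (hcover : R ∪ P = Finset.univ)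
    (b : Fin N → ℝ) (hb : b = α • ((1 - β • A)⁻¹ *ᵥ fun _ => 1))
    (Δ : {i // i ∈ R} → ℝ)
    (hΔ : Δ = (fun i : {i // i ∈ R} => b i.1) -
      α • ((1 - β • psub A R)⁻¹ *ᵥ fun _ => 1)) :
    ((1 - β • psub A R) *ᵥ Δ) =
        β • (pblock A R P *ᵥ fun j : {j // j ∈ P} => b j.1) ∧
      Δ = β • ((1 - β • psub A R)⁻¹ *ᵥ
        (pblock A R P *ᵥ fun j : {j // j ∈ P} => b j.1)) := by
  have hAdet := isUnit_det_one_sub_smul_of_nonneg_of_rowSum_lt hA hβ hrow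
  have hRdet : IsUnit (1 - β • psub A R).det :=
    isUnit_det_one_sub_smul_of_nonneg_of_rowSum_lt (fun i j => hA i.1 j.1) hβ fun i =>
      (mul_le_mul_of_nonneg_left (sum_psub_le_rowSum hA i) hβ).trans_lt (hrow i.1)
  have hfull : (1 - β • A) *ᵥ b = fun _ => α := by
    rw [hb, mulVec_smul, mulVec_nonsing_inv_mulVec hAdet]
    ext i
    simp
  have hdrop :
      (1 - β • psub A R) *ᵥ Δ = β • (pblock A R P *ᵥ fun j : {j // j ∈ P} => b j.1) := by
    rw [hΔ, mulVec_sub, one_sub_smul_psub_mulVec_restrict β hdisj hcover, hfull, mulVec_smul,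
      mulVec_nonsing_inv_mulVec hRdet]
    ext i
    simp
  refine ⟨hdrop, ?_⟩
  rw [← nonsing_inv_mulVec_mulVec hRdet Δ, hdrop, mulVec_smul]
end

section
/- Let A be an N×N real matrix with nonnegative entries, β ≥ 0 with β · max_i ∑_j A_{ij} < 1, and α ∈ ℝ. Partition the index set as V = R ∪ P with R and P disjoint, let b = α (I − β A)^{-1} 𝟙, and suppose every entry of b indexed by P equals a common value b̲ (i.e. b_P = b̲ 𝟙_P). Define the out-degree vector d^R ∈ ℝ^R by d^R_i = ∑_{j ∈ P} A_{ij}. Then the drop vector Δ^R := b_R − α (I − β A_{RR})^{-1} 𝟙_R equals q := β b̲ (I − β A_{RR})^{-1} d^R. -/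
open Matrix

/-!
Restricting the fixed-point equation `b = α 𝟙 + β A b` to the rows in `R` and splitting the
sum over `R ∪ P` gives `(I - β A_{RR}) b_R = α 𝟙 + β A_{RP} b_P = α 𝟙 + β b̲ d^R`, since `b` is
constant on `P`. Inverting `I - β A_{RR}`, which is strictly diagonally dominant, yields
`b_R = α (I - β A_{RR})⁻¹ 𝟙 + β b̲ (I - β A_{RR})⁻¹ d^R`.
-/

section DiagonallyDominant

variable {n : Type*} [Fintype n] [DecidableEq n]

theorem isUnit_det_one_sub_of_sum_norm_lt_one {K : Type*} [NormedField K] (B : Matrix n n K)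
    (hB : ∀ i, ∑ j, ‖B i j‖ < 1) : IsUnit (1 - B).det := by
  refine isUnit_iff_ne_zero.mpr (det_ne_zero_of_sum_row_lt_diag fun k => ?_)
  have hoff : ∑ j ∈ Finset.univ.erase k, ‖(1 - B) k j‖ = ∑ j ∈ Finset.univ.erase k, ‖B k j‖ :=
    Finset.sum_congr rfl fun j hj => by
      rw [Matrix.sub_apply, one_apply_ne (Finset.ne_of_mem_erase hj).symm, zero_sub, norm_neg]
  have hdiag : 1 - ‖B k k‖ ≤ ‖(1 - B) k k‖ := by
    simpa [Matrix.sub_apply, one_apply_eq] using norm_sub_norm_le (1 : K) (B k k)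
  have hsplit := Finset.sum_erase_add _ (fun j => ‖B k j‖) (Finset.mem_univ k)
  linarith [hB k]

theorem isUnit_det_one_sub_smul_of_nonneg (B : Matrix n n ℝ) {β : ℝ} (hB : ∀ i j, 0 ≤ B i j)
    (hβ : 0 ≤ β) (hrow : ∀ i, β * ∑ j, B i j < 1) : IsUnit (1 - β • B).det := by
  refine isUnit_det_one_sub_of_sum_norm_lt_one _ fun i => ?_
  simpa [Real.norm_of_nonneg (mul_nonneg hβ (hB i _)), Finset.mul_sum] using hrow i

end DiagonallyDominant

section PrincipalSubmatrix

variable {N : ℕ} (A : Matrix (Fin N) (Fin N) ℝ) {R P : Finset (Fin N)}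

theorem sum_psub_le_sum (hA : ∀ i j, 0 ≤ A i j) (i : {i // i ∈ R}) :
    ∑ j, psub A R i j ≤ ∑ j, A i j :=
  (Finset.sum_coe_sort R (A i)).trans_le <|
    Finset.sum_le_sum_of_subset_of_nonneg (Finset.subset_univ R) fun j _ _ => hA i j

theorem psub_mulVec_add_sum_eq_mulVec (hdisj : Disjoint R P) (hcover : R ∪ P = Finset.univ)
    (b : Fin N → ℝ) (i : {i // i ∈ R}) :
    (psub A R *ᵥ fun j => b j) i + ∑ j ∈ P, A i j * b j = (A *ᵥ b) i := by
  calc _ = ∑ j ∈ R, A i j * b j + ∑ j ∈ P, A i j * b j := by rw [← Finset.sum_coe_sort R]; rfl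
    _ = (A *ᵥ b) i := by rw [← Finset.sum_union hdisj, hcover]; rfl

theorem one_sub_smul_psub_mulVec_of_const_on {β bmin : ℝ} (hdisj : Disjoint R P)
    (hcover : R ∪ P = Finset.univ) {b c : Fin N → ℝ} (hbc : (1 - β • A) *ᵥ b = c)
    (hP : ∀ j ∈ P, b j = bmin) :
    (1 - β • psub A R) *ᵥ (fun i : {i // i ∈ R} => b i) =
      (fun i : {i // i ∈ R} => c i) + (β * bmin) • fun i : {i // i ∈ R} => ∑ j ∈ P, A i j := by
  ext i
  have hrow := congrFun hbc i
  have hsplit := psub_mulVec_add_sum_eq_mulVec A hdisj hcover b i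
  have hPsum : ∑ j ∈ P, A i j * b j = bmin * ∑ j ∈ P, A i j := by
    rw [Finset.mul_sum]
    exact Finset.sum_congr rfl fun j hj => by rw [hP j hj, mul_comm]
  simp only [sub_mulVec, one_mulVec, smul_mulVec, Pi.sub_apply, Pi.add_apply, Pi.smul_apply,
    smul_eq_mul] at hrow ⊢
  rw [← hrow, ← hsplit, hPsum]
  ring

end PrincipalSubmatrix

/-- If all entries of `b` on `P` equal the common value `b̲`, then the drop vector of `R`
equals `q = β b̲ (I - β A_{RR})⁻¹ d^R`, where `d^R_i = ∑_{j ∈ P} A_{ij}`. -/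
theorem drop_vector_out_degree {N : ℕ} (A : Matrix (Fin N) (Fin N) ℝ) (β α : ℝ)
    (hA : ∀ i j, 0 ≤ A i j) (hβ : 0 ≤ β) (hrow : ∀ i, β * ∑ j, A i j < 1)
    (R P : Finset (Fin N)) (hdisj : Disjoint R P) (hcover : R ∪ P = Finset.univ)
    (b : Fin N → ℝ) (hb : b = α • ((1 - β • A)⁻¹ *ᵥ fun _ => 1))
    (bmin : ℝ) (hP : ∀ j : Fin N, j ∈ P → b j = bmin)
    (dR : {i // i ∈ R} → ℝ) (hdR : dR = fun i => ∑ j ∈ P, A i.1 j)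
    (Δ : {i // i ∈ R} → ℝ)
    (hΔ : Δ = (fun i : {i // i ∈ R} => b i.1) -
      α • ((1 - β • psub A R)⁻¹ *ᵥ fun _ => 1)) :
    Δ = (β * bmin) • ((1 - β • psub A R)⁻¹ *ᵥ dR) := by
  have hU : IsUnit (1 - β • A).det := isUnit_det_one_sub_smul_of_nonneg A hA hβ hrow
  have hUR : IsUnit (1 - β • psub A R).det :=
    isUnit_det_one_sub_smul_of_nonneg _ (fun i j => hA i j) hβ fun i =>
      (mul_le_mul_of_nonneg_left (sum_psub_le_sum A hA i) hβ).trans_lt (hrow i)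
  have hfix : (1 - β • A) *ᵥ b = α • fun _ => 1 := by
    rw [hb, mulVec_smul, mulVec_mulVec, mul_nonsing_inv _ hU, one_mulVec]
  have hblock := one_sub_smul_psub_mulVec_of_const_on A hdisj hcover hfix hP
  have hbR := congrArg ((1 - β • psub A R)⁻¹ *ᵥ ·) hblock
  simp only [mulVec_mulVec, nonsing_inv_mul _ hUR, one_mulVec] at hbR
  have hconst : (fun i : {i // i ∈ R} => (α • fun _ => (1 : ℝ)) i.1) = α • fun _ => 1 := rfl
  rw [hΔ, hdR, hbR, hconst, mulVec_add, mulVec_smul, mulVec_smul, add_sub_cancel_left]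
end

section
/- Let A be an N×N real matrix with nonnegative entries and β ≥ 0 with β · max_i ∑_j A_{ij} < 1. Let b = (I − β A)^{-1} 𝟙 and b̲ = min_i b_i. If i is an index attaining the minimum, b_i = b̲, then for every subset S containing i, the Bonacich centrality of i in the induced subnetwork on S satisfies [(I − β A[S])^{-1} 𝟙_S]_i ≤ b̲; in particular min_{j ∈ S} [(I − β A[S])^{-1} 𝟙_S]_j ≤ b̲ whenever S contains a minimum-centrality node. -/
open Matrix

/-
Restricting `b` to `S` gives a supersolution of the subnetwork's equation: the links leaving `S`
only contribute the nonnegative amount `β ∑_{j ∉ S} A_ij b_j` to `b_i`. For a nonnegative matrix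
`M` with row sums below `1`, the operator `1 - M` satisfies a discrete maximum principle
(`(1 - M) y ≥ 0` forces `y ≥ 0`, by looking at a minimal entry of `y`), so every supersolution
dominates the solution: no node's centrality can grow when passing to a subnetwork.
-/

structure IsStrictlySubstochastic {n : Type*} [Fintype n] (M : Matrix n n ℝ) : Prop where
  nonneg : ∀ i j, 0 ≤ M i j
  sum_row_lt_one : ∀ i, ∑ j, M i j < 1

namespace IsStrictlySubstochastic

variable {n : Type*} [Fintype n] [DecidableEq n] {M : Matrix n n ℝ}

theorem nonneg_of_one_sub_mulVec_nonneg (hM : IsStrictlySubstochastic M) {y : n → ℝ}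
    (h : 0 ≤ (1 - M) *ᵥ y) : 0 ≤ y := by
  by_contra hy
  obtain ⟨k₀, hk₀⟩ : ∃ k, y k < 0 := by simpa [Pi.le_def] using hy
  obtain ⟨k, -, hk⟩ := Finset.exists_min_image Finset.univ y ⟨k₀, Finset.mem_univ _⟩
  have hyk : y k < 0 := (hk k₀ (Finset.mem_univ _)).trans_lt hk₀
  have hrow : (∑ j, M k j) * y k ≤ ∑ j, M k j * y j := by
    rw [Finset.sum_mul]
    exact Finset.sum_le_sum fun j _ => mul_le_mul_of_nonneg_left (hk j (Finset.mem_univ _))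
      (hM.nonneg k j)
  have hk_eq : ((1 - M) *ᵥ y) k = y k - ∑ j, M k j * y j := by
    rw [sub_mulVec, one_mulVec]
    rfl
  have hneg : (1 - ∑ j, M k j) * y k < 0 :=
    mul_neg_of_pos_of_neg (sub_pos.mpr (hM.sum_row_lt_one k)) hyk
  have h0 : 0 ≤ ((1 - M) *ᵥ y) k := h k
  linarith

theorem le_of_one_sub_mulVec_le (hM : IsStrictlySubstochastic M) {x y : n → ℝ}
    (h : (1 - M) *ᵥ x ≤ (1 - M) *ᵥ y) : x ≤ y :=
  sub_nonneg.mp <| hM.nonneg_of_one_sub_mulVec_nonneg <| by rwa [mulVec_sub, sub_nonneg]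

theorem isUnit_one_sub (hM : IsStrictlySubstochastic M) : IsUnit (1 - M) :=
  mulVec_injective_iff_isUnit.mp fun _ _ h =>
    (hM.le_of_one_sub_mulVec_le h.le).antisymm (hM.le_of_one_sub_mulVec_le h.ge)

theorem one_sub_mulVec_inv_mulVec (hM : IsStrictlySubstochastic M) (v : n → ℝ) :
    (1 - M) *ᵥ ((1 - M)⁻¹ *ᵥ v) = v := by
  rw [mulVec_mulVec, mul_nonsing_inv _ ((isUnit_iff_isUnit_det _).mp hM.isUnit_one_sub),
    one_mulVec]

end IsStrictlySubstochastic

section PrincipalSubmatrix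

variable {n : Type*} [Fintype n] {M : Matrix n n ℝ} (S : Finset n)

theorem submatrix_mulVec_le (hM : ∀ i j, 0 ≤ M i j) {y : n → ℝ} (hy : 0 ≤ y) :
    M.submatrix ((↑) : S → n) (↑) *ᵥ (y ∘ ((↑) : S → n)) ≤ (M *ᵥ y) ∘ ((↑) : S → n) :=
  fun p => by
  simp only [mulVec, dotProduct, submatrix_apply, Function.comp_apply]
  rw [Finset.sum_coe_sort S fun j => M p j * y j]
  exact Finset.sum_le_univ_sum_of_nonneg fun j => mul_nonneg (hM p j) (hy j)

theorem IsStrictlySubstochastic.submatrix [DecidableEq n] (hM : IsStrictlySubstochastic M) :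
    IsStrictlySubstochastic (M.submatrix ((↑) : S → n) (↑)) where
  nonneg p q := hM.nonneg p q
  sum_row_lt_one p := by
    have := submatrix_mulVec_le S hM.nonneg (y := fun _ => 1) (fun _ => zero_le_one) p
    simp only [mulVec, dotProduct, mul_one, Function.comp_apply] at this
    exact this.trans_lt (hM.sum_row_lt_one p)

theorem one_sub_mulVec_le_one_sub_submatrix_mulVec [DecidableEq n] (hM : ∀ i j, 0 ≤ M i j)
    {y : n → ℝ} (hy : 0 ≤ y) :
    ((1 - M) *ᵥ y) ∘ ((↑) : S → n) ≤
      (1 - M.submatrix ((↑) : S → n) (↑)) *ᵥ (y ∘ ((↑) : S → n)) := fun p => by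
  have := submatrix_mulVec_le S hM hy p
  simp only [sub_mulVec, one_mulVec, Function.comp_apply, Pi.sub_apply] at this ⊢
  linarith

end PrincipalSubmatrix

theorem min_node_always_below_general {N : ℕ} (A : Matrix (Fin N) (Fin N) ℝ) (β : ℝ)
    (hA : ∀ i j, 0 ≤ A i j) (hβ : 0 ≤ β) (hrow : ∀ i, β * ∑ j, A i j < 1)
    (b : Fin N → ℝ) (hb : b = (1 - β • A)⁻¹ *ᵥ fun _ => 1)
    (i : Fin N)
    (S : Finset (Fin N)) (hi : i ∈ S) :
    bon A β S ⟨i, hi⟩ ≤ b i := by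
  have hM : IsStrictlySubstochastic (β • A) :=
    ⟨fun i j => mul_nonneg hβ (hA i j), fun i => by simpa [Finset.mul_sum] using hrow i⟩
  have hb_eq : (1 - β • A) *ᵥ b = fun _ => 1 := by
    rw [hb]
    exact hM.one_sub_mulVec_inv_mulVec _
  have hb_nonneg : 0 ≤ b := by
    refine hM.nonneg_of_one_sub_mulVec_nonneg ?_
    rw [hb_eq]
    exact fun _ => zero_le_one
  have hbon : bon A β S =
      (1 - (β • A).submatrix ((↑) : S → Fin N) ((↑) : S → Fin N))⁻¹ *ᵥ fun _ => 1 :=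
    rfl
  suffices bon A β S ≤ b ∘ ((↑) : S → Fin N) from this ⟨i, hi⟩
  have hMS := hM.submatrix S
  refine hMS.le_of_one_sub_mulVec_le ?_
  calc (1 - (β • A).submatrix ((↑) : S → Fin N) (↑)) *ᵥ bon A β S = fun _ => 1 := by
        rw [hbon, hMS.one_sub_mulVec_inv_mulVec]
    _ = ((1 - β • A) *ᵥ b) ∘ ((↑) : S → Fin N) := by rw [hb_eq]; rfl
    _ ≤ _ := one_sub_mulVec_le_one_sub_submatrix_mulVec S hM.nonneg hb_nonneg

/-- A node attaining the minimal Bonacich centrality `b̲` of the full network has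
centrality at most `b̲` in every induced subnetwork containing it. -/
theorem min_node_always_below {N : ℕ} (A : Matrix (Fin N) (Fin N) ℝ) (β : ℝ)
    (hA : ∀ i j, 0 ≤ A i j) (hβ : 0 ≤ β) (hrow : ∀ i, β * ∑ j, A i j < 1)
    (b : Fin N → ℝ) (hb : b = (1 - β • A)⁻¹ *ᵥ fun _ => 1)
    (i : Fin N) (hmin : ∀ j, b i ≤ b j)
    (S : Finset (Fin N)) (hi : i ∈ S) :
    bon A β S ⟨i, hi⟩ ≤ b i :=
  min_node_always_below_general A β hA hβ hrow b hb i S hi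
end

section
/- Let A be an N×N real matrix with nonnegative entries and β ≥ 0 with β · max_i ∑_j A_{ij} < 1. Fix a subset R of {0,…,N−1}, let b = (I − β A)^{-1} 𝟙, and for any subset T define the drop vector Δ^T := b_T − (I − β A[T])^{-1} 𝟙_T where b_T is the restriction of b to T. Then for every nonempty S ⊆ R and every i ∈ S, Δ^S_i ≥ Δ^R_i ≥ 0. -/
open Matrix

/-- Drop vector of a subset `T`: the loss in Bonacich centrality relative to the
full network, `Δ^T = b_T - (I - β A[T])⁻¹ 𝟙_T`. -/
noncomputable def drop {N : ℕ} (A : Matrix (Fin N) (Fin N) ℝ) (β : ℝ) (T : Finset (Fin N)) :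
    {i // i ∈ T} → ℝ :=
  fun i => ((1 - β • A)⁻¹ *ᵥ fun _ => 1) i.1 - bon A β T i

/-!
Both inequalities are one comparison principle. If `C ≥ 0` has row sums below `1`, then `1 - C`
is inverse-monotone by the minimum principle, so `y = (1 - C)⁻¹ v` with `v ≥ 0` is nonnegative;
restricted to a subset it is a supersolution of the principal subsystem, since dropping the
nonnegative terms outside the subset only lowers `C y`. Hence the subsystem's solution lies below
the restriction of `y`: apply this to `R ⊆ univ` and to `S ⊆ R`.
-/

theorem Fintype.sum_comp_le_sum_of_injective {m n : Type*} [Fintype m] [Fintype n]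
    {f : n → m} (hf : Function.Injective f) {g : m → ℝ} (hg : 0 ≤ g) :
    ∑ j, g (f j) ≤ ∑ k, g k := by
  calc ∑ j, g (f j) = ∑ k ∈ Finset.univ.map ⟨f, hf⟩, g k :=
        (Finset.sum_map Finset.univ ⟨f, hf⟩ g).symm
    _ ≤ ∑ k, g k :=
      Finset.sum_le_sum_of_subset_of_nonneg (Finset.subset_univ _) fun k _ _ => hg k

namespace Matrix

variable {m n : Type*} [Fintype m] [Fintype n]

theorem submatrix_mulVec_comp_le_s13 {C : Matrix m m ℝ} (hC : ∀ i j, 0 ≤ C i j) {f : n → m}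
    (hf : Function.Injective f) {y : m → ℝ} (hy : 0 ≤ y) (i : n) :
    (C.submatrix f f *ᵥ (y ∘ f)) i ≤ (C *ᵥ y) (f i) :=
  Fintype.sum_comp_le_sum_of_injective hf fun k => mul_nonneg (hC (f i) k) (hy k)

theorem sum_submatrix_row_lt_one {C : Matrix m m ℝ} (hC : ∀ i j, 0 ≤ C i j)
    (hrow : ∀ i, ∑ j, C i j < 1) {f : n → m} (hf : Function.Injective f) (i : n) :
    ∑ j, C.submatrix f f i j < 1 :=
  (Fintype.sum_comp_le_sum_of_injective hf (hC (f i))).trans_lt (hrow (f i))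

variable [DecidableEq m] [DecidableEq n]

/-- Minimum principle: at a minimal coordinate, `x i ≥ (∑ j, C i j) * x i` with row sum `< 1`. -/
theorem nonneg_of_one_sub_mulVec_nonneg {C : Matrix n n ℝ} (hC : ∀ i j, 0 ≤ C i j)
    (hrow : ∀ i, ∑ j, C i j < 1) {x : n → ℝ} (hx : 0 ≤ (1 - C) *ᵥ x) : 0 ≤ x := by
  cases isEmpty_or_nonempty n
  · exact fun i => isEmptyElim i
  obtain ⟨i, hi⟩ := Finite.exists_min x
  have hxi : (∑ j, C i j) * x i ≤ x i :=
    calc (∑ j, C i j) * x i = ∑ j, C i j * x i := Finset.sum_mul _ _ _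
      _ ≤ ∑ j, C i j * x j :=
        Finset.sum_le_sum fun j _ => mul_le_mul_of_nonneg_left (hi j) (hC i j)
      _ ≤ x i := by
        have h := hx i
        rw [sub_mulVec, one_mulVec, Pi.zero_apply, Pi.sub_apply, sub_nonneg] at h
        exact h
  have : 0 ≤ x i := by nlinarith [hrow i]
  exact fun j => this.trans (hi j)

theorem le_of_one_sub_mulVec_le {C : Matrix n n ℝ} (hC : ∀ i j, 0 ≤ C i j)
    (hrow : ∀ i, ∑ j, C i j < 1) {x y : n → ℝ} (h : (1 - C) *ᵥ x ≤ (1 - C) *ᵥ y) : x ≤ y := by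
  rw [← sub_nonneg] at h ⊢
  rw [← mulVec_sub] at h
  exact nonneg_of_one_sub_mulVec_nonneg hC hrow h

theorem isUnit_one_sub {C : Matrix n n ℝ} (hC : ∀ i j, 0 ≤ C i j)
    (hrow : ∀ i, ∑ j, C i j < 1) : IsUnit (1 - C) := by
  refine mulVec_injective_iff_isUnit.mp fun x y h => le_antisymm ?_ ?_
  · exact le_of_one_sub_mulVec_le hC hrow h.le
  · exact le_of_one_sub_mulVec_le hC hrow h.ge

theorem one_sub_mulVec_inv_one_sub_mulVec {C : Matrix n n ℝ} (hC : ∀ i j, 0 ≤ C i j)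
    (hrow : ∀ i, ∑ j, C i j < 1) (v : n → ℝ) : (1 - C) *ᵥ ((1 - C)⁻¹ *ᵥ v) = v := by
  rw [mulVec_mulVec, mul_nonsing_inv _ ((isUnit_iff_isUnit_det _).mp (isUnit_one_sub hC hrow)),
    one_mulVec]

theorem inv_one_sub_mulVec_nonneg {C : Matrix n n ℝ} (hC : ∀ i j, 0 ≤ C i j)
    (hrow : ∀ i, ∑ j, C i j < 1) {v : n → ℝ} (hv : 0 ≤ v) : 0 ≤ (1 - C)⁻¹ *ᵥ v :=
  nonneg_of_one_sub_mulVec_nonneg hC hrow <| by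
    rwa [one_sub_mulVec_inv_one_sub_mulVec hC hrow]

theorem inv_one_sub_submatrix_mulVec_le {C : Matrix m m ℝ} (hC : ∀ i j, 0 ≤ C i j)
    (hrow : ∀ i, ∑ j, C i j < 1) {f : n → m} (hf : Function.Injective f) {v : m → ℝ}
    (hv : 0 ≤ v) : (1 - C.submatrix f f)⁻¹ *ᵥ (v ∘ f) ≤ ((1 - C)⁻¹ *ᵥ v) ∘ f := by
  have hB : ∀ i j, 0 ≤ C.submatrix f f i j := fun i j => hC (f i) (f j)
  have hrowB := sum_submatrix_row_lt_one hC hrow hf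
  set y := (1 - C)⁻¹ *ᵥ v
  have hy : 0 ≤ y := inv_one_sub_mulVec_nonneg hC hrow hv
  have hCy : (1 - C) *ᵥ y = v := one_sub_mulVec_inv_one_sub_mulVec hC hrow v
  refine le_of_one_sub_mulVec_le hB hrowB fun i => ?_
  rw [one_sub_mulVec_inv_one_sub_mulVec hB hrowB, ← hCy]
  simp only [sub_mulVec, one_mulVec, Pi.sub_apply, Function.comp_apply]
  exact sub_le_sub_left (submatrix_mulVec_comp_le_s13 hC hf hy i) _

end Matrix

/-- Drops are nonnegative and entrywise monotone under shrinking the survivor set: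
for nonempty `S ⊆ R` and `i ∈ S`, `Δ^S_i ≥ Δ^R_i ≥ 0`. -/
theorem drop_monotone {N : ℕ} (A : Matrix (Fin N) (Fin N) ℝ) (β : ℝ)
    (hA : ∀ i j, 0 ≤ A i j) (hβ : 0 ≤ β) (hrow : ∀ i, β * ∑ j, A i j < 1)
    (R : Finset (Fin N)) :
    ∀ S : Finset (Fin N), ∀ hSR : S ⊆ R, S.Nonempty →
      ∀ i : Fin N, ∀ hi : i ∈ S,
        drop A β R ⟨i, hSR hi⟩ ≤ drop A β S ⟨i, hi⟩ ∧ 0 ≤ drop A β R ⟨i, hSR hi⟩ := by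
  intro S hSR _ i hi
  have hC : ∀ i j, 0 ≤ (β • A) i j := fun i j => mul_nonneg hβ (hA i j)
  have hrowC : ∀ i, ∑ j, (β • A) i j < 1 := fun i => by
    simpa only [Matrix.smul_apply, smul_eq_mul, ← Finset.mul_sum] using hrow i
  -- `bon A β T` unfolds to the system for `(β • A).submatrix val val`, and `psub A S` is a
  -- submatrix of `psub A R`.
  have hbon_R_le : bon A β R ⟨i, hSR hi⟩ ≤ ((1 - β • A)⁻¹ *ᵥ fun _ => 1) i :=
    inv_one_sub_submatrix_mulVec_le hC hrowC Subtype.val_injective (fun _ => zero_le_one) _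
  have hbon_S_le : bon A β S ⟨i, hi⟩ ≤ bon A β R ⟨i, hSR hi⟩ :=
    inv_one_sub_submatrix_mulVec_le (C := β • psub A R)
      (f := fun j : {j // j ∈ S} => (⟨j.1, hSR j.2⟩ : {j // j ∈ R}))
      (fun j k => hC j k) (sum_submatrix_row_lt_one hC hrowC Subtype.val_injective)
      (fun _ _ h => Subtype.ext (congrArg Subtype.val h :)) (fun _ => zero_le_one) _
  exact ⟨sub_le_sub_left hbon_S_le _, sub_nonneg.mpr hbon_R_le⟩
end
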